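/- Let q be a positive integer, let c_1, …, c_q be natural numbers (capacities), and let s be a natural number with s ≤ ∑_{ℓ=1}^q c_ℓ. Define δ_q, δ_{q−1}, …, δ_1 by the backward greedy rule: starting with t = s, for ℓ = q down to 1 set δ_ℓ := min(t, c_ℓ) and then replace t by t − δ_ℓ. Then ∑_{ℓ=1}^q δ_ℓ = s, and for every tuple of natural numbers m_1, …, m_q with m_ℓ ≤ c_ℓ for all ℓ and ∑_{ℓ=1}^q m_ℓ = s, it holds for every ℓ ∈ {1, …, q} that ∑_{ℓ'=ℓ}^q δ_{ℓ'} ≥ ∑_{ℓ'=ℓ}^q m_{ℓ'} (equivalently, ∑_{ℓ'=1}^{ℓ} δ_{ℓ'} ≤ ∑_{ℓ'=1}^{ℓ} m_{ℓ'} for every ℓ). -/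
import Mathlib


/-- `remAux c q s k` is the number of still-unallocated jobs after the backward
greedy allocation has filled the `k` last supply periods `q, q-1, …, q-k+1`. -/
def remAux (c : ℕ → ℕ) (q s : ℕ) : ℕ → ℕ
  | 0 => s
  | (k + 1) => remAux c q s k - min (remAux c q s k) (c (q - k))

/-- `greedyDelta c q s ℓ` is the number of jobs that the backward greedy
Allocation algorithm assigns to supply period `ℓ` (for `1 ≤ ℓ ≤ q`):
`δ_ℓ = min(t, c_ℓ)` where `t` is the amount remaining after periods `ℓ+1, …, q`. -/
def greedyDelta (c : ℕ → ℕ) (q s ℓ : ℕ) : ℕ :=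
  min (remAux c q s (q - ℓ)) (c ℓ)

lemma remAux_eq (c : ℕ → ℕ) (q s : ℕ) : ∀ k, k ≤ q →
    remAux c q s k = s - ∑ ℓ ∈ Finset.Icc (q - k + 1) q, c ℓ := by
  intro k
  induction k with
  | zero =>
      intro _
      rw [Finset.Icc_eq_empty (by omega)]
      simp [remAux]
  | succ k ih =>
      intro hk
      have hk' : k ≤ q := by omega
      have h1 : remAux c q s (k + 1)
          = remAux c q s k - min (remAux c q s k) (c (q - k)) := rfl
      rw [h1, ih hk', show q - (k + 1) + 1 = q - k by omega,
        ← Finset.Ioc_insert_left (show q - k ≤ q by omega),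
        Finset.sum_insert Finset.left_notMem_Ioc,
        show q - k + 1 = (q - k) + 1 from rfl, Finset.Icc_add_one_left_eq_Ioc]
      omega

lemma sum_greedy_suffix (c : ℕ → ℕ) (q s : ℕ) : ∀ k, k ≤ q →
    ∑ ℓ ∈ Finset.Icc (q - k + 1) q, greedyDelta c q s ℓ = s - remAux c q s k := by
  intro k
  induction k with
  | zero =>
      intro _
      rw [Finset.Icc_eq_empty (by omega)]
      simp [remAux]
  | succ k ih =>
      intro hk
      have hk' : k ≤ q := by omega
      have hR : remAux c q s k ≤ s := by
        rw [remAux_eq c q s k hk']; omega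
      have h1 : remAux c q s (k + 1)
          = remAux c q s k - min (remAux c q s k) (c (q - k)) := rfl
      have hg : greedyDelta c q s (q - k) = min (remAux c q s k) (c (q - k)) := by
        unfold greedyDelta
        rw [show q - (q - k) = k by omega]
      rw [show q - (k + 1) + 1 = q - k by omega,
        ← Finset.Ioc_insert_left (show q - k ≤ q by omega),
        Finset.sum_insert Finset.left_notMem_Ioc, h1, hg]
      rw [show q - k + 1 = (q - k) + 1 from rfl, Finset.Icc_add_one_left_eq_Ioc] at ih
      rw [ih hk']
      omega

lemma suffix_le (q s : ℕ) (c : ℕ → ℕ)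
    (hs : s ≤ ∑ ℓ ∈ Finset.Icc 1 q, c ℓ)
    (m : ℕ → ℕ) (hm1 : ∀ ℓ, 1 ≤ ℓ → ℓ ≤ q → m ℓ ≤ c ℓ)
    (hm2 : ∑ ℓ ∈ Finset.Icc 1 q, m ℓ = s) :
    ∀ ℓ, 1 ≤ ℓ →
      ∑ ℓ' ∈ Finset.Icc ℓ q, m ℓ' ≤ ∑ ℓ' ∈ Finset.Icc ℓ q, greedyDelta c q s ℓ' := by
  intro ℓ hℓ
  by_cases hlq : ℓ ≤ q
  · have hk : q - ℓ + 1 ≤ q := by omega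
    have hA := sum_greedy_suffix c q s (q - ℓ + 1) hk
    have hB := remAux_eq c q s (q - ℓ + 1) hk
    rw [show q - (q - ℓ + 1) + 1 = ℓ by omega] at hA hB
    have hmle1 : ∑ ℓ' ∈ Finset.Icc ℓ q, m ℓ' ≤ s := by
      rw [← hm2]
      exact Finset.sum_le_sum_of_subset (Finset.Icc_subset_Icc_left hℓ)
    have hmle2 : ∑ ℓ' ∈ Finset.Icc ℓ q, m ℓ' ≤ ∑ ℓ' ∈ Finset.Icc ℓ q, c ℓ' := by
      apply Finset.sum_le_sum
      intro i hi
      simp only [Finset.mem_Icc] at hi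
      exact hm1 i (by omega) hi.2
    rw [hA, hB]
    omega
  · rw [Finset.Icc_eq_empty (by omega)]
    simp

/-- The backward greedy allocation distributes all `s` jobs, and for
every capacity-respecting allocation `m` of `s` jobs it dominates on every suffix
of periods (equivalently, is dominated on every prefix). -/
theorem backward_greedy_allocation (q s : ℕ) (hq : 1 ≤ q) (c : ℕ → ℕ)
    (hs : s ≤ ∑ ℓ ∈ Finset.Icc 1 q, c ℓ) :
    (∑ ℓ ∈ Finset.Icc 1 q, greedyDelta c q s ℓ = s) ∧
    (∀ m : ℕ → ℕ, (∀ ℓ, 1 ≤ ℓ → ℓ ≤ q → m ℓ ≤ c ℓ) →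
      (∑ ℓ ∈ Finset.Icc 1 q, m ℓ = s) →
      ∀ ℓ, 1 ≤ ℓ → ℓ ≤ q →
        (∑ ℓ' ∈ Finset.Icc ℓ q, m ℓ' ≤ ∑ ℓ' ∈ Finset.Icc ℓ q, greedyDelta c q s ℓ') ∧
        (∑ ℓ' ∈ Finset.Icc 1 ℓ, greedyDelta c q s ℓ' ≤ ∑ ℓ' ∈ Finset.Icc 1 ℓ, m ℓ')) := by
  have htot : ∑ ℓ ∈ Finset.Icc 1 q, greedyDelta c q s ℓ = s := by
    have hA := sum_greedy_suffix c q s q le_rfl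
    have hB := remAux_eq c q s q le_rfl
    rw [show q - q + 1 = 1 by omega] at hA hB
    rw [hA, hB]
    omega
  refine ⟨htot, ?_⟩
  intro m hm1 hm2 ℓ hℓ hℓq
  refine ⟨suffix_le q s c hs m hm1 hm2 ℓ hℓ, ?_⟩
  have hsplit : ∀ f : ℕ → ℕ,
      ∑ ℓ' ∈ Finset.Icc 1 ℓ, f ℓ' + ∑ ℓ' ∈ Finset.Icc (ℓ + 1) q, f ℓ'
        = ∑ ℓ' ∈ Finset.Icc 1 q, f ℓ' := by
    intro f
    rw [Finset.Icc_add_one_left_eq_Ioc, show (1 : ℕ) = 0 + 1 from rfl, Finset.Icc_add_one_left_eq_Ioc,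
      Finset.sum_Ioc_consecutive f (by omega : (0:ℕ) ≤ ℓ) hℓq, Finset.Icc_add_one_left_eq_Ioc]
  have h1 := hsplit m
  have h2 := hsplit (greedyDelta c q s)
  have h3 := suffix_le q s c hs m hm1 hm2 (ℓ + 1) (by omega)
  omega
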